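/- Fix an integer m ≥ 3, an integer ℓ with 1 ≤ ℓ ≤ m−1, a ∈ ℂ^m, and λ ∈ ℂ. If u_1 and u_2 are both nonconstant entire solutions of −u''(z) + V_a(z)·u(z) = λ·u(z) that tend to 0 as r → +∞ along both rays z = r e^{iθ}, θ = −π/2 ± (ℓ+1)π/(m+2), then u_1 and u_2 are linearly dependent: there exists c ∈ ℂ with u_2(z) = c·u_1(z) for all z ∈ ℂ (the geometric multiplicity of every eigenvalue of H_ℓ is 1). -/

import Mathlib

open Complex Real Filter Set

noncomputable section

/-- `Ppoly m a z = a₁ z^(m-1) + a₂ z^(m-2) + ⋯ + a_m`. -/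
def Ppoly (m : ℕ) (a : Fin m → ℂ) (z : ℂ) : ℂ :=
  ∑ i : Fin m, a i * z ^ (m - 1 - (i : ℕ))

/-- The potential `V_a(z) = (-1)^ℓ (iz)^m - P(iz)`. -/
def Vpot (m ℓ : ℕ) (a : Fin m → ℂ) (z : ℂ) : ℂ :=
  (-1) ^ ℓ * (Complex.I * z) ^ m - Ppoly m a (Complex.I * z)

/-- `u` is an eigenfunction of `H_ℓ` (coefficient vector `a`) with eigenvalue `lam`:
a nonconstant entire solution of `-u'' + V_a u = lam·u` decaying along the two rays
`arg z = -π/2 ± (ℓ+1)π/(m+2)`. -/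
def IsEigenfunction (m ℓ : ℕ) (a : Fin m → ℂ) (lam : ℂ) (u : ℂ → ℂ) : Prop :=
  Differentiable ℂ u ∧ (∃ z w : ℂ, u z ≠ u w) ∧
  (∀ z : ℂ, -(deriv (deriv u) z) + Vpot m ℓ a z * u z = lam * u z) ∧
  Tendsto (fun r : ℝ => u (r * Complex.exp ((-(π/2) + (ℓ+1)*π/(m+2) : ℝ) * Complex.I)))
    atTop (nhds 0) ∧
  Tendsto (fun r : ℝ => u (r * Complex.exp ((-(π/2) - (ℓ+1)*π/(m+2) : ℝ) * Complex.I)))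
    atTop (nhds 0)

/-- `lam` is an eigenvalue of `H_ℓ` with coefficient vector `a`. -/
def IsEigenvalue (m ℓ : ℕ) (a : Fin m → ℂ) (lam : ℂ) : Prop :=
  ∃ u : ℂ → ℂ, IsEigenfunction m ℓ a lam u

/-- An admissible enumeration `(lam n)_{n ≥ N0}` of the eigenvalues of `H_ℓ`:
each `lam n` is an eigenvalue, the map is injective, moduli are nondecreasing, and
all but finitely many eigenvalues occur among the `lam n`. -/
def AdmissibleEnum (m ℓ : ℕ) (a : Fin m → ℂ) (N0 : ℤ) (lam : ℤ → ℂ) : Prop :=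
  (∀ n : ℤ, N0 ≤ n → IsEigenvalue m ℓ a (lam n)) ∧
  (∀ n₁ n₂ : ℤ, N0 ≤ n₁ → N0 ≤ n₂ → lam n₁ = lam n₂ → n₁ = n₂) ∧
  (∀ n : ℤ, N0 ≤ n → ‖lam n‖ ≤ ‖lam (n+1)‖) ∧
  {μ : ℂ | IsEigenvalue m ℓ a μ ∧ ∀ n : ℤ, N0 ≤ n → lam n ≠ μ}.Finite

/-!
Along the ray `z = r ω`, `ω = exp (i θ)`, `θ = -π/2 + (ℓ+1)π/(m+2)`, an eigenfunction `u`
restricts to `F(r) = u(r ω)` with `F'' = q F`, where `q(r) = ω² (V_a(r ω) - λ) = r^m + O(r^(m-1))`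
since `(-1)^ℓ i^m ω^(m+2) = 1`. Then `p = Re (conj F · F')` has `p' = |F'|² + Re q |F|² ≥ 0` for
large `r`, and `2 p = (|F|²)'` with `|F|² → 0`, so `p ≤ 0` and `F'` is square integrable near `+∞`.
The Wronskian of two eigenfunctions is constant, and along the ray it is eventually bounded by
`|F₁'| + |F₂'|`; a nonzero constant is not square integrable on a half-line, so the Wronskian
vanishes, `u₂ / u₁` is locally constant where `u₁ ≠ 0`, and the identity theorem gives `u₂ = c u₁`.
-/

open MeasureTheory Topology

theorem nonpos_of_hasDerivAt_of_monotoneOn_of_tendsto {h g : ℝ → ℝ} {R l : ℝ}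
    (hh : ∀ r, HasDerivAt h (g r) r) (hg : MonotoneOn g (Ici R))
    (hl : Tendsto h atTop (𝓝 l)) : ∀ r ≥ R, g r ≤ 0 := by
  intro r₀ hr₀
  by_contra! hpos
  have htangent : ∀ r > r₀, h r₀ + g r₀ * (r - r₀) ≤ h r := by
    intro r hr
    obtain ⟨ξ, hξ, hslope⟩ := exists_hasDerivAt_eq_slope h g hr
      (fun x _ => (hh x).continuousAt.continuousWithinAt) (fun x _ => hh x)
    have hgξ : g r₀ ≤ g ξ := hg hr₀ (hr₀.trans hξ.1.le) hξ.1.le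
    rw [hslope, le_div_iff₀ (sub_pos.mpr hr)] at hgξ
    linarith
  have hline : Tendsto (fun r => h r₀ + g r₀ * (r - r₀)) atTop atTop :=
    tendsto_atTop_add_const_left _ _
      ((tendsto_atTop_add_const_right _ _ tendsto_id).const_mul_atTop hpos)
  exact not_tendsto_nhds_of_tendsto_atTop
    (tendsto_atTop_mono' _ ((eventually_gt_atTop r₀).mono htangent) hline) l hl

theorem integrableOn_Ioi_norm_sq_deriv {F F₁ q : ℝ → ℂ} {R : ℝ}
    (hF : ∀ r, HasDerivAt F (F₁ r) r) (hF₁ : ∀ r, HasDerivAt F₁ (q r * F r) r)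
    (hq : ∀ r ≥ R, 0 ≤ (q r).re) (hF0 : Tendsto F atTop (𝓝 0)) :
    IntegrableOn (fun r => ‖F₁ r‖ ^ 2) (Ioi R) := by
  set p : ℝ → ℝ := fun r => inner ℝ (F r) (F₁ r)
  have hp : ∀ r, HasDerivAt p (‖F₁ r‖ ^ 2 + (q r).re * ‖F r‖ ^ 2) r := by
    intro r
    refine ((hF r).inner ℝ (hF₁ r)).congr_deriv ?_
    simp only [Complex.inner, mul_assoc, Complex.mul_conj, Complex.normSq_eq_norm_sq,
      Complex.re_mul_ofReal, Complex.ofReal_re]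
    ring
  have hp_mono : MonotoneOn p (Ici R) :=
    monotoneOn_of_hasDerivWithinAt_nonneg (convex_Ici R)
      (fun x _ => (hp x).continuousAt.continuousWithinAt)
      (fun x _ => (hp x).hasDerivWithinAt)
      (fun x hx => by
        rw [interior_Ici] at hx
        exact add_nonneg (sq_nonneg _) (mul_nonneg (hq x hx.le) (sq_nonneg _)))
  have hp_nonpos : ∀ r ≥ R, p r ≤ 0 := by
    have hF0' : Tendsto (fun r => ‖F r‖ ^ 2) atTop (𝓝 0) := by
      simpa using hF0.norm.pow 2
    intro r hr
    have := nonpos_of_hasDerivAt_of_monotoneOn_of_tendsto (fun r => (hF r).norm_sq)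
      (fun x hx y hy hxy => by linarith [hp_mono hx hy hxy]) hF0' r hr
    linarith
  have hF₁c : Continuous F₁ := continuous_iff_continuousAt.mpr fun r => (hF₁ r).continuousAt
  refine integrableOn_Ioi_of_intervalIntegral_norm_bounded (-p R) R
    (fun T => (hF₁c.norm.pow 2).integrableOn_Ioc) tendsto_id ?_
  filter_upwards [eventually_ge_atTop R] with T hT
  have hle := intervalIntegral.integral_le_sub_of_hasDeriv_right_of_le hT
    (fun x _ => (hp x).continuousAt.continuousWithinAt) (fun x _ => (hp x).hasDerivWithinAt)
    (hF₁c.norm.pow 2).integrableOn_Icc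
    (fun x hx => le_add_of_nonneg_right (mul_nonneg (hq x hx.1.le) (sq_nonneg _)))
  simp only [id, norm_pow, norm_norm, Pi.pow_apply] at hle ⊢
  linarith [hp_nonpos T hT]

theorem eq_zero_of_mul_sub_mul_eq_of_tendsto_zero {F G F₁ G₁ : ℝ → ℂ} {c : ℂ} {R : ℝ}
    (hF : Tendsto F atTop (𝓝 0)) (hG : Tendsto G atTop (𝓝 0))
    (hF₁ : IntegrableOn (fun r => ‖F₁ r‖ ^ 2) (Ioi R))
    (hG₁ : IntegrableOn (fun r => ‖G₁ r‖ ^ 2) (Ioi R))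
    (hW : ∀ r, F r * G₁ r - G r * F₁ r = c) : c = 0 := by
  obtain ⟨R₁, hR₁⟩ := eventually_atTop.mp
    ((hF.norm.eventually_le_const (by simp)).and (hG.norm.eventually_le_const (by simp)) :
      ∀ᶠ r in atTop, ‖F r‖ ≤ 1 ∧ ‖G r‖ ≤ 1)
  have hbound : ∀ r ∈ Ioi (max R R₁), ‖‖c‖ ^ 2‖ ≤ 2 * (‖F₁ r‖ ^ 2 + ‖G₁ r‖ ^ 2) := by
    intro r hr
    obtain ⟨hFr, hGr⟩ := hR₁ r (le_of_max_le_right hr.out.le)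
    have hc : ‖c‖ ≤ ‖G₁ r‖ + ‖F₁ r‖ := by
      calc ‖c‖ = ‖F r * G₁ r - G r * F₁ r‖ := by rw [hW]
        _ ≤ ‖F r‖ * ‖G₁ r‖ + ‖G r‖ * ‖F₁ r‖ := by
          simpa only [norm_mul] using norm_sub_le (F r * G₁ r) (G r * F₁ r)
        _ ≤ ‖G₁ r‖ + ‖F₁ r‖ := by gcongr <;> nlinarith [norm_nonneg (G₁ r), norm_nonneg (F₁ r)]
    rw [norm_pow, norm_norm]
    nlinarith [norm_nonneg c, sq_nonneg (‖G₁ r‖ - ‖F₁ r‖)]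
  have hsum : IntegrableOn (fun r => 2 * (‖F₁ r‖ ^ 2 + ‖G₁ r‖ ^ 2)) (Ioi (max R R₁)) :=
    IntegrableOn.mono_set ((hF₁.add hG₁).const_mul 2) (Ioi_subset_Ioi (le_max_left R R₁))
  have hconst : IntegrableOn (fun _ => ‖c‖ ^ 2) (Ioi (max R R₁)) :=
    hsum.mono' aestronglyMeasurable_const
      ((ae_restrict_iff' measurableSet_Ioi).mpr (.of_forall hbound))
  rw [integrableOn_const_iff, Real.volume_Ioi] at hconst
  simpa using hconst

def wronskian (u v : ℂ → ℂ) (z : ℂ) : ℂ :=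
  u z * deriv v z - v z * deriv u z

section

variable {u v Q : ℂ → ℂ}

theorem wronskian_eq_of_deriv_deriv_eq (hu : Differentiable ℂ u) (hv : Differentiable ℂ v)
    (hu'' : ∀ z, deriv (deriv u) z = Q z * u z) (hv'' : ∀ z, deriv (deriv v) z = Q z * v z)
    (z w : ℂ) : wronskian u v z = wronskian u v w := by
  have hW : ∀ z, HasDerivAt (wronskian u v) 0 z := fun z => by
    refine (((hu z).hasDerivAt.mul (hv.deriv z).hasDerivAt).sub
      ((hv z).hasDerivAt.mul (hu.deriv z).hasDerivAt)).congr_deriv ?_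
    rw [hu'', hv'']
    ring
  exact is_const_of_deriv_eq_zero (fun z => (hW z).differentiableAt) (fun z => (hW z).deriv) z w

theorem exists_eq_const_mul_of_wronskian_eq_zero (hu : Differentiable ℂ u)
    (hv : Differentiable ℂ v) {z₀ : ℂ} (hz₀ : u z₀ ≠ 0) (hW : ∀ z, wronskian u v z = 0) :
    ∃ c, ∀ z, v z = c * u z := by
  obtain ⟨δ, hδ, hball⟩ := Metric.isOpen_iff.mp (isOpen_ne_fun hu.continuous continuous_const)
    z₀ hz₀
  have hquot : ∀ z ∈ Metric.ball z₀ δ, HasDerivAt (fun z => v z / u z) 0 z := fun z hz => by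
    refine ((hv z).hasDerivAt.div (hu z).hasDerivAt (hball hz)).congr_deriv ?_
    rw [div_eq_zero_iff, ← hW z, wronskian]
    left
    ring
  have hconst : ∀ z ∈ Metric.ball z₀ δ, v z / u z = v z₀ / u z₀ := fun z hz =>
    Metric.isOpen_ball.is_const_of_deriv_eq_zero (convex_ball z₀ δ).isPreconnected
      (fun z hz => (hquot z hz).differentiableAt.differentiableWithinAt)
      (fun z hz => (hquot z hz).deriv) hz (Metric.mem_ball_self hδ)
  refine ⟨v z₀ / u z₀, congrFun (AnalyticOnNhd.eq_of_eventuallyEq (z₀ := z₀)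
    (fun z _ => hv.analyticAt z) (fun z _ => (hu.const_mul _).analyticAt z) ?_)⟩
  filter_upwards [Metric.ball_mem_nhds z₀ hδ] with z hz
  rw [← hconst z hz, div_mul_cancel₀ _ (hball hz)]

theorem hasDerivAt_comp_ofReal_mul (hu : Differentiable ℂ u) (ω : ℂ) (r : ℝ) :
    HasDerivAt (fun r : ℝ => u (r * ω)) (ω * deriv u (r * ω)) r :=
  (((hu _).hasDerivAt.comp (r : ℂ) (hasDerivAt_mul_const ω)).comp_ofReal).congr_deriv
    (mul_comm _ _)

theorem integrableOn_Ioi_norm_sq_deriv_comp_ofReal_mul (hu : Differentiable ℂ u)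
    (hu'' : ∀ z, deriv (deriv u) z = Q z * u z) {ω : ℂ} {R : ℝ}
    (hQ : ∀ r ≥ R, 0 ≤ (ω ^ 2 * Q (r * ω)).re)
    (hu0 : Tendsto (fun r : ℝ => u (r * ω)) atTop (𝓝 0)) :
    IntegrableOn (fun r : ℝ => ‖ω * deriv u (r * ω)‖ ^ 2) (Ioi R) := by
  refine integrableOn_Ioi_norm_sq_deriv (hasDerivAt_comp_ofReal_mul hu ω)
    (fun r => ?_) hQ hu0
  refine ((hasDerivAt_comp_ofReal_mul hu.deriv ω r).const_mul ω).congr_deriv ?_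
  rw [hu'']
  ring

theorem wronskian_eq_zero_of_tendsto_zero_along_ray (hu : Differentiable ℂ u)
    (hv : Differentiable ℂ v) (hu'' : ∀ z, deriv (deriv u) z = Q z * u z)
    (hv'' : ∀ z, deriv (deriv v) z = Q z * v z) {ω : ℂ} (hω : ω ≠ 0) {R : ℝ}
    (hQ : ∀ r ≥ R, 0 ≤ (ω ^ 2 * Q (r * ω)).re)
    (hu0 : Tendsto (fun r : ℝ => u (r * ω)) atTop (𝓝 0))
    (hv0 : Tendsto (fun r : ℝ => v (r * ω)) atTop (𝓝 0)) (z : ℂ) :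
    wronskian u v z = 0 := by
  have hconst := wronskian_eq_of_deriv_deriv_eq hu hv hu'' hv''
  have hray : ∀ r : ℝ, u (r * ω) * (ω * deriv v (r * ω)) - v (r * ω) * (ω * deriv u (r * ω))
      = ω * wronskian u v 0 := fun r => by
    rw [← hconst (r * ω), wronskian]
    ring
  have h0 := eq_zero_of_mul_sub_mul_eq_of_tendsto_zero hu0 hv0
    (integrableOn_Ioi_norm_sq_deriv_comp_ofReal_mul hu hu'' hQ hu0)
    (integrableOn_Ioi_norm_sq_deriv_comp_ofReal_mul hv hv'' hQ hv0) hray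
  rw [hconst z 0]
  exact (mul_eq_zero.mp h0).resolve_left hω

end

theorem neg_one_pow_mul_I_pow_mul_exp_pow (m ℓ : ℕ) :
    (-1 : ℂ) ^ ℓ * I ^ m *
      exp (((-(π/2) + (ℓ+1)*π/(m+2) : ℝ) : ℂ) * I) ^ (m + 2) = 1 := by
  have hsplit : exp (((-(π/2) + (ℓ+1)*π/(m+2) : ℝ) : ℂ) * I) ^ (m + 2)
      = exp (-π / 2 * I) ^ (m + 2) * exp (π * I) ^ (ℓ + 1) := by
    have hm : (m : ℂ) + 2 ≠ 0 := by norm_cast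
    simp only [← Complex.exp_nat_mul, ← Complex.exp_add]
    congr 1
    push_cast
    field_simp
  rw [hsplit, exp_neg_pi_div_two_mul_I, exp_pi_mul_I]
  calc (-1 : ℂ) ^ ℓ * I ^ m * ((-I) ^ (m + 2) * (-1) ^ (ℓ + 1))
      = -((-1) ^ ℓ * (-1) ^ ℓ) * (I * -I) ^ m * (-I) ^ 2 := by ring
    _ = 1 := by norm_num [← mul_pow]

theorem norm_Ppoly_le (m : ℕ) (a : Fin m → ℂ) {z : ℂ} (hz : 1 ≤ ‖z‖) :
    ‖Ppoly m a z‖ ≤ (∑ i, ‖a i‖) * ‖z‖ ^ (m - 1) := by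
  rw [Ppoly, Finset.sum_mul]
  refine (norm_sum_le _ _).trans (Finset.sum_le_sum fun i _ => ?_)
  rw [norm_mul, norm_pow]
  exact mul_le_mul_of_nonneg_left (pow_le_pow_right₀ hz (by omega)) (norm_nonneg _)

theorem eventually_nonneg_re_mul_Vpot_sub {m ℓ : ℕ} (hm : 1 ≤ m) (a : Fin m → ℂ) (lam : ℂ)
    {ω : ℂ} (hω : ‖ω‖ = 1) (hphase : (-1 : ℂ) ^ ℓ * I ^ m * ω ^ (m + 2) = 1) :
    ∀ᶠ r : ℝ in atTop, 0 ≤ (ω ^ 2 * (Vpot m ℓ a (r * ω) - lam)).re := by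
  set C := ∑ i, ‖a i‖ + ‖lam‖
  filter_upwards [eventually_ge_atTop 1, eventually_ge_atTop C] with r hr1 hrC
  have hrot : ω ^ 2 * (Vpot m ℓ a (r * ω) - lam)
      = (r : ℂ) ^ m - ω ^ 2 * (Ppoly m a (I * (r * ω)) + lam) := by
    rw [Vpot]
    linear_combination (r : ℂ) ^ m * hphase
  have hnorm : ‖I * (r * ω)‖ = r := by
    rw [norm_mul, norm_mul, norm_I, hω, norm_real, Real.norm_of_nonneg (by linarith)]
    ring
  have hbound : ‖ω ^ 2 * (Ppoly m a (I * (r * ω)) + lam)‖ ≤ C * r ^ (m - 1) := by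
    have hpow : 1 ≤ r ^ (m - 1) := one_le_pow₀ hr1
    have hP := norm_Ppoly_le m a (hnorm.symm ▸ hr1)
    rw [hnorm] at hP
    calc ‖ω ^ 2 * (Ppoly m a (I * (r * ω)) + lam)‖
        ≤ ‖Ppoly m a (I * (r * ω))‖ + ‖lam‖ := by
          rw [norm_mul, norm_pow, hω, one_pow, one_mul]; exact norm_add_le _ _
      _ ≤ C * r ^ (m - 1) := by nlinarith [norm_nonneg lam]
  have hrm : r ^ m = r * r ^ (m - 1) := by rw [← pow_succ', Nat.sub_add_cancel hm]
  rw [hrot, sub_re, ← ofReal_pow, ofReal_re]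
  nlinarith [re_le_norm (ω ^ 2 * (Ppoly m a (I * (r * ω)) + lam)),
    pow_nonneg (zero_le_one.trans hr1) (m - 1)]

theorem geometric_multiplicity_one_general (m ℓ : ℕ) (hm : 3 ≤ m)
    (a : Fin m → ℂ) (lam : ℂ) (u₁ u₂ : ℂ → ℂ)
    (h₁ : IsEigenfunction m ℓ a lam u₁) (h₂ : IsEigenfunction m ℓ a lam u₂) :
    ∃ c : ℂ, ∀ z : ℂ, u₂ z = c * u₁ z := by
  obtain ⟨hu₁, ⟨z, w, hzw⟩, hode₁, hray₁, -⟩ := h₁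
  obtain ⟨hu₂, -, hode₂, hray₂, -⟩ := h₂
  have hsol : ∀ u : ℂ → ℂ, (∀ z, -deriv (deriv u) z + Vpot m ℓ a z * u z = lam * u z) →
      ∀ z, deriv (deriv u) z = (Vpot m ℓ a z - lam) * u z :=
    fun u hode z => by linear_combination -hode z
  obtain ⟨R, hR⟩ := eventually_atTop.mp (eventually_nonneg_re_mul_Vpot_sub (by omega) a lam
    (norm_exp_ofReal_mul_I _) (neg_one_pow_mul_I_pow_mul_exp_pow m ℓ))
  have hW := wronskian_eq_zero_of_tendsto_zero_along_ray hu₁ hu₂ (hsol u₁ hode₁)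
    (hsol u₂ hode₂) (exp_ne_zero _) hR hray₁ hray₂
  obtain ⟨z₀, hz₀⟩ : ∃ z₀, u₁ z₀ ≠ 0 := by
    by_contra! h
    exact hzw (by rw [h z, h w])
  exact exists_eq_const_mul_of_wronskian_eq_zero hu₁ hu₂ hz₀ hW

/-- The geometric multiplicity of every eigenvalue of `H_ℓ` is one: any two
eigenfunctions associated with the same eigenvalue are linearly dependent. -/
theorem geometric_multiplicity_one (m ℓ : ℕ) (hm : 3 ≤ m) (hℓ1 : 1 ≤ ℓ) (hℓ2 : ℓ ≤ m - 1)
    (a : Fin m → ℂ) (lam : ℂ) (u₁ u₂ : ℂ → ℂ)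
    (h₁ : IsEigenfunction m ℓ a lam u₁) (h₂ : IsEigenfunction m ℓ a lam u₂) :
    ∃ c : ℂ, ∀ z : ℂ, u₂ z = c * u₁ z :=
  geometric_multiplicity_one_general m ℓ hm a lam u₁ u₂ h₁ h₂

end
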